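/- Let m₁ < m₂ and τ, τ' > 0, and define A_τ := { (x,y) ∈ ℝ² : τ ≤ y, m₁x ≤ y, m₁(x - τ/m₂) ≥ y - τ }. Then ∫_{A_τ} dx dy/(xy) = ∫_{A_{τ'}} dx dy/(xy); that is, the integral is independent of τ. -/

import Mathlib

/-!
The measure `dx dy / (xy)` is invariant under every dilation `p ↦ c • p`, `c ≠ 0`: the integrand
picks up the factor `c⁻²` and Lebesgue measure on `ℝ²` the factor `c²`. The dilation by
`c = τ' / τ > 0` maps `A_τ` onto `A_{τ'}`.
-/

open MeasureTheory Module
open scoped ENNReal Pointwise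

namespace MeasureTheory.Measure

variable {E : Type*} [NormedAddCommGroup E] [NormedSpace ℝ E] [MeasurableSpace E] [BorelSpace E]
  [FiniteDimensional ℝ E] (μ : Measure E) [IsAddHaarMeasure μ]

theorem setLIntegral_comp_smul (f : E → ℝ≥0∞) {R : ℝ} (s : Set E) (hR : R ≠ 0) :
    ∫⁻ x in s, f (R • x) ∂μ = ENNReal.ofReal |(R ^ finrank ℝ E)⁻¹| * ∫⁻ x in R • s, f x ∂μ := by
  let e : E ≃ᵐ E := MeasurableEquiv.smul₀ R hR
  have hs : e ⁻¹' (R • s) = s := by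
    simp only [e, MeasurableEquiv.coe_smul₀, Set.preimage_smul₀ hR, inv_smul_smul₀ hR]
  calc ∫⁻ x in s, f (R • x) ∂μ
      = ∫⁻ y, f y ∂(μ.restrict (e ⁻¹' (R • s))).map e := by
        rw [lintegral_map_equiv, hs]; rfl
    _ = ∫⁻ y in R • s, f y ∂μ.map (R • ·) := by
        rw [← e.restrict_map]; rfl
    _ = ENNReal.ofReal |(R ^ finrank ℝ E)⁻¹| * ∫⁻ x in R • s, f x ∂μ := by
        rw [map_addHaar_smul μ hR, restrict_smul, lintegral_smul_measure, smul_eq_mul]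

end MeasureTheory.Measure

theorem ofReal_one_div_mul_smul (c : ℝ) (p : ℝ × ℝ) :
    ENNReal.ofReal (1 / ((c • p).1 * (c • p).2)) =
      ENNReal.ofReal (c ^ 2)⁻¹ * ENNReal.ofReal (1 / (p.1 * p.2)) := by
  rw [← ENNReal.ofReal_mul (by positivity), Prod.smul_fst, Prod.smul_snd, smul_eq_mul, smul_eq_mul]
  congr 1
  field_simp

theorem setLIntegral_one_div_mul_smul_set {c : ℝ} (hc : c ≠ 0) (s : Set (ℝ × ℝ)) :
    ∫⁻ p in c • s, ENNReal.ofReal (1 / (p.1 * p.2)) =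
      ∫⁻ p in s, ENNReal.ofReal (1 / (p.1 * p.2)) := by
  have hc2 : 0 < (c ^ 2)⁻¹ := by positivity
  have h := Measure.setLIntegral_comp_smul volume
    (fun p : ℝ × ℝ => ENNReal.ofReal (1 / (p.1 * p.2))) s hc
  simp only [ofReal_one_div_mul_smul, finrank_prod, finrank_self, one_add_one_eq_two,
    abs_of_pos hc2, lintegral_const_mul' _ _ ENNReal.ofReal_ne_top] at h
  exact ((ENNReal.mul_right_inj (ENNReal.ofReal_pos.mpr hc2).ne' ENNReal.ofReal_ne_top).mp h).symm

def strip (m₁ m₂ τ : ℝ) : Set (ℝ × ℝ) :=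
  {p | τ ≤ p.2 ∧ m₁ * p.1 ≤ p.2 ∧ p.2 - τ ≤ m₁ * (p.1 - τ / m₂)}

theorem smul_strip {c : ℝ} (hc : 0 < c) (m₁ m₂ τ : ℝ) :
    c • strip m₁ m₂ τ = strip m₁ m₂ (c * τ) := by
  ext ⟨x, y⟩
  rw [Set.mem_smul_set_iff_inv_smul_mem₀ hc.ne']
  simp only [strip, Set.mem_ofPred_eq, Prod.smul_mk, smul_eq_mul]
  field_simp

theorem strip_integral_tau_independent_general (m₁ m₂ τ τ' : ℝ)
    (hτ : 0 < τ) (hτ' : 0 < τ') :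
    (∫⁻ p in {p : ℝ × ℝ | τ ≤ p.2 ∧ m₁ * p.1 ≤ p.2 ∧ p.2 - τ ≤ m₁ * (p.1 - τ / m₂)},
        ENNReal.ofReal (1 / (p.1 * p.2))) =
      (∫⁻ p in {p : ℝ × ℝ | τ' ≤ p.2 ∧ m₁ * p.1 ≤ p.2 ∧ p.2 - τ' ≤ m₁ * (p.1 - τ' / m₂)},
        ENNReal.ofReal (1 / (p.1 * p.2))) := by
  obtain ⟨c, hc, rfl⟩ : ∃ c, 0 < c ∧ τ' = c * τ := ⟨τ' / τ, by positivity, by field_simp⟩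
  change ∫⁻ p in strip m₁ m₂ τ, _ = ∫⁻ p in strip m₁ m₂ (c * τ), _
  rw [← smul_strip hc, setLIntegral_one_div_mul_smul_set hc.ne']

/-- The integral of `1/(xy)` over the strip `A_τ` is independent of `τ`. -/
theorem strip_integral_tau_independent (m₁ m₂ τ τ' : ℝ)
    (hm₁ : 0 < m₁) (hm₂ : 0 < m₂) (hm : m₁ < m₂) (hτ : 0 < τ) (hτ' : 0 < τ') :
    (∫⁻ p in {p : ℝ × ℝ | τ ≤ p.2 ∧ m₁ * p.1 ≤ p.2 ∧ p.2 - τ ≤ m₁ * (p.1 - τ / m₂)},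
        ENNReal.ofReal (1 / (p.1 * p.2))) =
      (∫⁻ p in {p : ℝ × ℝ | τ' ≤ p.2 ∧ m₁ * p.1 ≤ p.2 ∧ p.2 - τ' ≤ m₁ * (p.1 - τ' / m₂)},
        ENNReal.ofReal (1 / (p.1 * p.2))) :=
  strip_integral_tau_independent_general m₁ m₂ τ τ' hτ hτ'
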